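/- Cut-free RK4 is sound with respect to PS4 models: if a hypersequent H has a cut-free derivation in RK4, then H has no countermodel in any PS4 model. -/
import Mathlib


inductive Fm where
  | atom : ℕ → Fm
  | neg : Fm → Fm
  | and : Fm → Fm → Fm
  | or : Fm → Fm → Fm
  | box : Fm → Fm
deriving DecidableEq

def skAnd : Option Bool → Option Bool → Option Bool
  | some false, _ => some false
  | _, some false => some false
  | some true, some true => some true
  | _, _ => none

def skOr : Option Bool → Option Bool → Option Bool
  | some true, _ => some true
  | _, some true => some true
  | some false, some false => some false
  | _, _ => none

open Classical in
/-- Three-valued Strong Kleene evaluation (`some true` = 1, `some false` = 0, `none` = *). -/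
noncomputable def Eval {W : Type} (R : W → W → Prop) (v : W → ℕ → Option Bool) :
    Fm → W → Option Bool
  | .atom n, x => v x n
  | .neg φ, x => (Eval R v φ x).map (!·)
  | .and φ ψ, x => skAnd (Eval R v φ x) (Eval R v ψ x)
  | .or φ ψ, x => skOr (Eval R v φ x) (Eval R v ψ x)
  | .box φ, x =>
      if ∀ y, R x y → Eval R v φ y = some true then some true
      else if ∃ y, R x y ∧ Eval R v φ y = some false then some false
      else none

/-- A sequent is a pair of finite sets of formulas. -/
abbrev HSeq := Finset Fm × Finset Fm
/-- A hypersequent is a finite list of sequents. -/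
abbrev Hyp := List HSeq

/-- Hypersequent derivability, parametrized by which optional rules are present:
`cut` = the Cut rule, `ec` = external contraction, `ew` = insertion of an empty
sequent anywhere, `sym` = reversal of the hypersequent, `t` = the T rule. The
base rules (Id, EWL, EWR, TL, TR, ¬, ∧, ∨, □L, □R) are always present. -/
inductive Der (cut ec ew sym t : Bool) : Hyp → Prop
  | id (n : ℕ) : Der cut ec ew sym t [({Fm.atom n}, {Fm.atom n})]
  | cutR (hc : cut = true) (G H : Hyp) (Γ Δ : Finset Fm) (φ : Fm) :
      Der cut ec ew sym t (G ++ [(Γ, insert φ Δ)] ++ H) →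
      Der cut ec ew sym t (G ++ [(insert φ Γ, Δ)] ++ H) →
      Der cut ec ew sym t (G ++ [(Γ, Δ)] ++ H)
  | ewl (G : Hyp) : Der cut ec ew sym t G → Der cut ec ew sym t ((∅, ∅) :: G)
  | ewr (G : Hyp) : Der cut ec ew sym t G → Der cut ec ew sym t (G ++ [(∅, ∅)])
  | tl (G H : Hyp) (Γ Δ : Finset Fm) (φ : Fm) :
      Der cut ec ew sym t (G ++ [(Γ, Δ)] ++ H) →
      Der cut ec ew sym t (G ++ [(insert φ Γ, Δ)] ++ H)
  | tr (G H : Hyp) (Γ Δ : Finset Fm) (φ : Fm) :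
      Der cut ec ew sym t (G ++ [(Γ, Δ)] ++ H) →
      Der cut ec ew sym t (G ++ [(Γ, insert φ Δ)] ++ H)
  | negL (G H : Hyp) (Γ Δ : Finset Fm) (φ : Fm) :
      Der cut ec ew sym t (G ++ [(Γ, insert φ Δ)] ++ H) →
      Der cut ec ew sym t (G ++ [(insert (.neg φ) Γ, Δ)] ++ H)
  | negR (G H : Hyp) (Γ Δ : Finset Fm) (φ : Fm) :
      Der cut ec ew sym t (G ++ [(insert φ Γ, Δ)] ++ H) →
      Der cut ec ew sym t (G ++ [(Γ, insert (.neg φ) Δ)] ++ H)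
  | andL1 (G H : Hyp) (Γ Δ : Finset Fm) (φ ψ : Fm) :
      Der cut ec ew sym t (G ++ [(insert φ Γ, Δ)] ++ H) →
      Der cut ec ew sym t (G ++ [(insert (.and φ ψ) Γ, Δ)] ++ H)
  | andL2 (G H : Hyp) (Γ Δ : Finset Fm) (φ ψ : Fm) :
      Der cut ec ew sym t (G ++ [(insert ψ Γ, Δ)] ++ H) →
      Der cut ec ew sym t (G ++ [(insert (.and φ ψ) Γ, Δ)] ++ H)
  | andR (G H : Hyp) (Γ Δ : Finset Fm) (φ ψ : Fm) :
      Der cut ec ew sym t (G ++ [(Γ, insert φ Δ)] ++ H) →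
      Der cut ec ew sym t (G ++ [(Γ, insert ψ Δ)] ++ H) →
      Der cut ec ew sym t (G ++ [(Γ, insert (.and φ ψ) Δ)] ++ H)
  | orL (G H : Hyp) (Γ Δ : Finset Fm) (φ ψ : Fm) :
      Der cut ec ew sym t (G ++ [(insert φ Γ, Δ)] ++ H) →
      Der cut ec ew sym t (G ++ [(insert ψ Γ, Δ)] ++ H) →
      Der cut ec ew sym t (G ++ [(insert (.or φ ψ) Γ, Δ)] ++ H)
  | orR1 (G H : Hyp) (Γ Δ : Finset Fm) (φ ψ : Fm) :
      Der cut ec ew sym t (G ++ [(Γ, insert φ Δ)] ++ H) →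
      Der cut ec ew sym t (G ++ [(Γ, insert (.or φ ψ) Δ)] ++ H)
  | orR2 (G H : Hyp) (Γ Δ : Finset Fm) (φ ψ : Fm) :
      Der cut ec ew sym t (G ++ [(Γ, insert ψ Δ)] ++ H) →
      Der cut ec ew sym t (G ++ [(Γ, insert (.or φ ψ) Δ)] ++ H)
  | boxL (G H : Hyp) (Γ Δ Sg Λ : Finset Fm) (φ : Fm) :
      Der cut ec ew sym t (G ++ [(Γ, Δ), (insert φ Sg, Λ)] ++ H) →
      Der cut ec ew sym t (G ++ [(insert (.box φ) Γ, Δ), (Sg, Λ)] ++ H)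
  | boxR (G : Hyp) (Γ Δ : Finset Fm) (φ : Fm) :
      Der cut ec ew sym t (G ++ [(Γ, Δ), (∅, {φ})]) →
      Der cut ec ew sym t (G ++ [(Γ, insert (.box φ) Δ)])
  | ecR (he : ec = true) (G H : Hyp) (Γ Δ : Finset Fm) :
      Der cut ec ew sym t (G ++ [(Γ, Δ), (Γ, Δ)] ++ H) →
      Der cut ec ew sym t (G ++ [(Γ, Δ)] ++ H)
  | ewRule (he : ew = true) (G H : Hyp) :
      Der cut ec ew sym t (G ++ H) →
      Der cut ec ew sym t (G ++ [(∅, ∅)] ++ H)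
  | symRule (hs : sym = true) (G : Hyp) :
      Der cut ec ew sym t G → Der cut ec ew sym t G.reverse
  | tRule (ht : t = true) (G H : Hyp) (Γ Δ : Finset Fm) (φ : Fm) :
      Der cut ec ew sym t (G ++ [(insert φ Γ, Δ)] ++ H) →
      Der cut ec ew sym t (G ++ [(insert (.box φ) Γ, Δ)] ++ H)

/-- PS4 frame conditions together with S information preservation for atoms. -/
def PS4Model {W : Type} (R S : W → W → Prop) (v : W → ℕ → Option Bool) : Prop :=
  (∀ x, S x x) ∧
  (∀ x, R x x) ∧
  (∀ x y z, R x y → R y z → ∃ w, R x w ∧ S z w) ∧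
  (∀ x y z, R x y → S x z → ∃ w, R z w ∧ S y w) ∧
  (∀ x z w, S x z → R z w → ∃ y, R x y ∧ S y w) ∧
  (∀ x y, S x y → ∀ n, (v x n).isSome → v y n = v x n)

/-- A point refutes a sequent in a three-valued model: antecedents have value 1,
succedents have value 0. -/
def Refutes3 {W : Type} (R : W → W → Prop) (v : W → ℕ → Option Bool) (S : HSeq) (w : W) : Prop :=
  (∀ φ ∈ S.1, Eval R v φ w = some true) ∧ (∀ φ ∈ S.2, Eval R v φ w = some false)

/-- A branch of R-related points starting at `w` countermodels the hypersequent
in a three-valued model. -/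
def Counter3 {W : Type} (R : W → W → Prop) (v : W → ℕ → Option Bool) : Hyp → W → Prop
  | [], _ => True
  | [S], w => Refutes3 R v S w
  | S :: S' :: rest, w => Refutes3 R v S w ∧ ∃ w', R w w' ∧ Counter3 R v (S' :: rest) w'

/-- Cut-free RK4: RK without Cut (Id, EWL, EWR, TL, TR, ¬,∧,∨ rules, □L, □R)
plus EW. -/
abbrev RK4cf : Hyp → Prop := Der false false true false false

section Soundness

variable {W : Type} {R S : W → W → Prop} {v : W → ℕ → Option Bool}

lemma skAnd_eq_true (a b : Option Bool) :
    skAnd a b = some true ↔ a = some true ∧ b = some true := by revert a b; decide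

lemma skAnd_eq_false (a b : Option Bool) :
    skAnd a b = some false ↔ a = some false ∨ b = some false := by revert a b; decide

lemma skOr_eq_true (a b : Option Bool) :
    skOr a b = some true ↔ a = some true ∨ b = some true := by revert a b; decide

lemma skOr_eq_false (a b : Option Bool) :
    skOr a b = some false ↔ a = some false ∧ b = some false := by revert a b; decide

lemma eval_neg (φ : Fm) (x : W) (b : Bool) :
    Eval R v (.neg φ) x = some b ↔ Eval R v φ x = some (!b) := by
  cases h : Eval R v φ x with
  | none => simp [Eval, h]
  | some a => cases a <;> cases b <;> simp [Eval, h]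

lemma eval_box_true (φ : Fm) (x : W) :
    Eval R v (.box φ) x = some true ↔ ∀ y, R x y → Eval R v φ y = some true := by
  simp only [Eval]
  split
  · simp_all
  · split <;> simp_all

lemma eval_box_false (φ : Fm) (x : W) :
    Eval R v (.box φ) x = some false ↔ ∃ y, R x y ∧ Eval R v φ y = some false := by
  simp only [Eval]
  split
  · rename_i h
    constructor
    · intro hh; exact absurd hh (by simp)
    · rintro ⟨y, hy, hf⟩; rw [h y hy] at hf; exact absurd hf (by simp)
  · split
    · rename_i h; simpa using h
    · rename_i h; constructor
      · intro hh; exact absurd hh (by simp)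
      · intro hh; exact absurd hh h

lemma eval_S (hM : PS4Model R S v) :
    ∀ (φ : Fm) ⦃x y : W⦄, S x y → ∀ b, Eval R v φ x = some b → Eval R v φ y = some b := by
  obtain ⟨-, -, -, hForth, hBack, hAtom⟩ := hM
  intro φ
  induction φ with
  | atom n =>
    intro x y hxy b hb
    simp only [Eval] at hb ⊢
    rw [hAtom x y hxy n (by simp [hb])]; exact hb
  | neg φ ih =>
    intro x y hxy b hb
    rw [eval_neg] at hb ⊢
    exact ih hxy _ hb
  | and φ ψ ihφ ihψ =>
    intro x y hxy b hb
    simp only [Eval] at hb ⊢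
    cases b with
    | false =>
      rcases (skAnd_eq_false _ _).1 hb with h | h
      · exact (skAnd_eq_false _ _).2 (Or.inl (ihφ hxy _ h))
      · exact (skAnd_eq_false _ _).2 (Or.inr (ihψ hxy _ h))
    | true =>
      obtain ⟨h1, h2⟩ := (skAnd_eq_true _ _).1 hb
      exact (skAnd_eq_true _ _).2 ⟨ihφ hxy _ h1, ihψ hxy _ h2⟩
  | or φ ψ ihφ ihψ =>
    intro x y hxy b hb
    simp only [Eval] at hb ⊢
    cases b with
    | true =>
      rcases (skOr_eq_true _ _).1 hb with h | h
      · exact (skOr_eq_true _ _).2 (Or.inl (ihφ hxy _ h))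
      · exact (skOr_eq_true _ _).2 (Or.inr (ihψ hxy _ h))
    | false =>
      obtain ⟨h1, h2⟩ := (skOr_eq_false _ _).1 hb
      exact (skOr_eq_false _ _).2 ⟨ihφ hxy _ h1, ihψ hxy _ h2⟩
  | box φ ih =>
    intro x y hxy b hb
    cases b with
    | false =>
      rw [eval_box_false] at hb ⊢
      obtain ⟨z, hxz, hz⟩ := hb
      obtain ⟨w', hyw', hSzw'⟩ := hForth x z y hxz hxy
      exact ⟨w', hyw', ih hSzw' _ hz⟩
    | true =>
      rw [eval_box_true] at hb ⊢
      intro w' hyw'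
      obtain ⟨z, hxz, hSzw'⟩ := hBack x y w' hxy hyw'
      exact ih hSzw' _ (hb z hxz)

lemma refutes_S (hM : PS4Model R S v) {x y : W} (hxy : S x y) {s : HSeq}
    (h : Refutes3 R v s x) : Refutes3 R v s y :=
  ⟨fun φ hφ => eval_S hM φ hxy _ (h.1 φ hφ), fun φ hφ => eval_S hM φ hxy _ (h.2 φ hφ)⟩

lemma counter3_cons (s : HSeq) (L : Hyp) (w : W) :
    Counter3 R v (s :: L) w ↔
      Refutes3 R v s w ∧ (L = [] ∨ ∃ w', R w w' ∧ Counter3 R v L w') := by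
  cases L with
  | nil => simp [Counter3]
  | cons a t => simp [Counter3]

lemma counter3_S (hM : PS4Model R S v) :
    ∀ (L : Hyp) {x y : W}, S x y → Counter3 R v L x → Counter3 R v L y := by
  intro L
  induction L with
  | nil => intro x y _ _; trivial
  | cons s L ih =>
    intro x y hxy h
    rw [counter3_cons] at h ⊢
    refine ⟨refutes_S hM hxy h.1, ?_⟩
    rcases h.2 with rfl | ⟨w', hxw', hc⟩
    · exact Or.inl rfl
    · obtain ⟨w'', hyw'', hS⟩ := hM.2.2.2.1 x w' y hxw' hxy
      exact Or.inr ⟨w'', hyw'', ih hS hc⟩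

/-- `CTo L w u`: a countermodel branch for `L` starting at `w` with last world `u`. -/
def CTo (R : W → W → Prop) (v : W → ℕ → Option Bool) : Hyp → W → W → Prop
  | [], w, u => w = u
  | [s], w, u => Refutes3 R v s w ∧ w = u
  | s :: s' :: L, w, u => Refutes3 R v s w ∧ ∃ w', R w w' ∧ CTo R v (s' :: L) w' u

lemma counter3_iff_cto : ∀ (L : Hyp) (w : W), Counter3 R v L w ↔ ∃ u, CTo R v L w u := by
  intro L
  induction L with
  | nil => intro w; simp [Counter3, CTo]
  | cons s L ih =>
    intro w
    cases L with
    | nil => simp [Counter3, CTo]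
    | cons a t =>
      simp only [Counter3, CTo]
      constructor
      · rintro ⟨hr, w', hR, hc⟩
        obtain ⟨u, hu⟩ := (ih w').1 hc
        exact ⟨u, hr, w', hR, hu⟩
      · rintro ⟨u, hr, w', hR, hc⟩
        exact ⟨hr, w', hR, (ih w').2 ⟨u, hc⟩⟩

lemma cto_append' : ∀ (G : Hyp) (a : HSeq) (l : HSeq) (L : Hyp) (w u : W),
    CTo R v (a :: (G ++ l :: L)) w u ↔
      ∃ m m', CTo R v (a :: G) w m ∧ R m m' ∧ CTo R v (l :: L) m' u := by
  intro G
  induction G with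
  | nil =>
    intro a l L w u
    simp only [List.nil_append, CTo]
    constructor
    · rintro ⟨hr, w', hR, hc⟩; exact ⟨w, w', ⟨hr, rfl⟩, hR, hc⟩
    · rintro ⟨m, m', ⟨hr, rfl⟩, hR, hc⟩; exact ⟨hr, m', hR, hc⟩
  | cons b G ih =>
    intro a l L w u
    simp only [List.cons_append, CTo]
    constructor
    · rintro ⟨hr, w', hR, hc⟩
      obtain ⟨m, m', h1, h2, h3⟩ := (ih b l L w' u).1 hc
      exact ⟨m, m', ⟨hr, w', hR, h1⟩, h2, h3⟩
    · rintro ⟨m, m', ⟨hr, w', hR, h1⟩, h2, h3⟩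
      exact ⟨hr, w', hR, (ih b l L w' u).2 ⟨m, m', h1, h2, h3⟩⟩

/-- Zipper lemma: from a countermodel of `G ++ (a :: M) ++ H` extract the local
branch for `a :: M` together with a way to plug in any replacement branch with
the same endpoints. -/
lemma counter3_zip (a : HSeq) (M G H : Hyp) (w : W)
    (hc : Counter3 R v (G ++ (a :: M) ++ H) w) :
    ∃ w₀ u₀, CTo R v (a :: M) w₀ u₀ ∧
      ∀ (b : HSeq) (M' : Hyp), CTo R v (b :: M') w₀ u₀ →
        ∃ u, Counter3 R v (G ++ (b :: M') ++ H) u := by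
  rw [counter3_iff_cto] at hc
  obtain ⟨u, hu⟩ := hc
  cases G with
  | nil =>
    cases H with
    | nil =>
      simp only [List.nil_append, List.append_nil] at hu ⊢
      exact ⟨w, u, hu, fun b M' hb => ⟨w, (counter3_iff_cto _ _).2 ⟨u, hb⟩⟩⟩
    | cons c H' =>
      simp only [List.nil_append, List.cons_append] at hu ⊢
      obtain ⟨m, m', h1, h2, h3⟩ := (cto_append' M a c H' w u).1 hu
      refine ⟨w, m, h1, fun b M' hb => ⟨w, ?_⟩⟩
      rw [counter3_iff_cto]
      exact ⟨u, (cto_append' M' b c H' w u).2 ⟨m, m', hb, h2, h3⟩⟩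
  | cons g G' =>
    cases H with
    | nil =>
      simp only [List.append_nil, List.cons_append] at hu ⊢
      obtain ⟨m, m', h1, h2, h3⟩ := (cto_append' G' g a M w u).1 hu
      refine ⟨m', u, h3, fun b M' hb => ⟨w, ?_⟩⟩
      rw [counter3_iff_cto]
      exact ⟨u, (cto_append' G' g b M' w u).2 ⟨m, m', h1, h2, hb⟩⟩
    | cons c H' =>
      simp only [List.cons_append, List.append_assoc] at hu ⊢
      obtain ⟨m, m', h1, h2, h3⟩ := (cto_append' G' g a (M ++ c :: H') w u).1 hu
      rw [show (a :: (M ++ c :: H')) = a :: (M ++ c :: H') from rfl] at h3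
      obtain ⟨n, n', k1, k2, k3⟩ := (cto_append' M a c H' m' u).1 h3
      refine ⟨m', n, k1, fun b M' hb => ⟨w, ?_⟩⟩
      rw [counter3_iff_cto]
      exact ⟨u, (cto_append' G' g b (M' ++ c :: H') w u).2
        ⟨m, m', h1, h2, (cto_append' M' b c H' m' u).2 ⟨n, n', hb, k2, k3⟩⟩⟩

/-- End version of the zipper: the replacement branch may have a new endpoint. -/
lemma counter3_zip_end (a : HSeq) (M G : Hyp) (w : W)
    (hc : Counter3 R v (G ++ (a :: M)) w) :
    ∃ w₀ u₀, CTo R v (a :: M) w₀ u₀ ∧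
      ∀ (b : HSeq) (M' : Hyp) (u' : W), CTo R v (b :: M') w₀ u' →
        ∃ u, Counter3 R v (G ++ (b :: M')) u := by
  rw [counter3_iff_cto] at hc
  obtain ⟨u, hu⟩ := hc
  cases G with
  | nil =>
    simp only [List.nil_append] at hu ⊢
    exact ⟨w, u, hu, fun b M' u' hb => ⟨w, (counter3_iff_cto _ _).2 ⟨u', hb⟩⟩⟩
  | cons g G' =>
    simp only [List.cons_append] at hu ⊢
    obtain ⟨m, m', h1, h2, h3⟩ := (cto_append' G' g a M w u).1 hu
    refine ⟨m', u, h3, fun b M' u' hb => ⟨w, ?_⟩⟩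
    rw [counter3_iff_cto]
    exact ⟨u', (cto_append' G' g b M' w u').2 ⟨m, m', h1, h2, hb⟩⟩

/-- Removing an empty sequent from a countermodel, using pseudo-transitivity
and `S`-invariance. -/
lemma counter3_remove_empty (hM : PS4Model R S v) :
    ∀ (G H : Hyp) (w : W), Counter3 R v (G ++ [((∅ : Finset Fm), (∅ : Finset Fm))] ++ H) w →
      ∃ u, Counter3 R v (G ++ H) u := by
  intro G H w hc
  cases G with
  | nil =>
    simp only [List.nil_append, List.cons_append] at hc ⊢
    rw [counter3_cons] at hc
    rcases hc.2 with rfl | ⟨w', _, h⟩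
    · exact ⟨w, trivial⟩
    · exact ⟨w', h⟩
  | cons g G' =>
    rw [counter3_iff_cto] at hc
    obtain ⟨u, hu⟩ := hc
    cases H with
    | nil =>
      simp only [List.append_nil, List.cons_append] at hu ⊢
      obtain ⟨m, m', h1, h2, h3⟩ := (cto_append' G' g (∅, ∅) [] w u).1 hu
      exact ⟨w, (counter3_iff_cto _ _).2 ⟨m, h1⟩⟩
    | cons c H' =>
      simp only [List.cons_append, List.append_assoc, List.nil_append] at hu ⊢
      obtain ⟨m, m', h1, h2, h3⟩ := (cto_append' G' g (∅, ∅) (c :: H') w u).1 hu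
      obtain ⟨-, m2, hRm2, k3⟩ := h3
      obtain ⟨z, hRmz, hSz⟩ := hM.2.2.1 m m' m2 h2 hRm2
      have hcz : Counter3 R v (c :: H') z :=
        counter3_S hM _ hSz ((counter3_iff_cto _ _).2 ⟨u, k3⟩)
      obtain ⟨u2, hu2⟩ := (counter3_iff_cto _ _).1 hcz
      exact ⟨w, (counter3_iff_cto _ _).2
        ⟨u2, (cto_append' G' g c H' w u2).2 ⟨m, z, h1, hRmz, hu2⟩⟩⟩

end Soundness
/-- Cut-free RK4 is sound with respect to PS4 models: a cut-free
derivable hypersequent has no countermodel in any PS4 model. -/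
theorem RK4cf_sound_PS4 :
    ∀ H : Hyp, RK4cf H →
      ∀ (W : Type) (R S : W → W → Prop) (v : W → ℕ → Option Bool),
        PS4Model R S v → ∀ w : W, ¬ Counter3 R v H w := by
  intro H hH W R S v hM
  induction hH with
  | id n =>
    intro w hC
    obtain ⟨h1, h2⟩ := hC
    have e1 := h1 (.atom n) (Finset.mem_singleton_self _)
    have e2 := h2 (.atom n) (Finset.mem_singleton_self _)
    rw [e1] at e2; exact absurd e2 (by simp)
  | cutR hc => exact absurd hc (by simp)
  | ecR he => exact absurd he (by simp)
  | symRule hs => exact absurd hs (by simp)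
  | tRule ht => exact absurd ht (by simp)
  | ewl G _ ih =>
    intro w hC
    rw [counter3_cons] at hC
    rcases hC.2 with rfl | ⟨w', _, hc⟩
    · exact ih w trivial
    · exact ih w' hc
  | ewr G _ ih =>
    intro w hC
    obtain ⟨u, hu⟩ := counter3_remove_empty hM G [] w (by simpa using hC)
    exact ih u (by simpa using hu)
  | ewRule he G H _ ih =>
    intro w hC
    obtain ⟨u, hu⟩ := counter3_remove_empty hM G H w hC
    exact ih u hu
  | tl G H Γ Δ φ _ ih =>
    intro w hC
    obtain ⟨w₀, u₀, hcto, k⟩ := counter3_zip _ [] G H w hC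
    simp only [CTo] at hcto
    obtain ⟨hr, rfl⟩ := hcto
    obtain ⟨u, hu⟩ := k (Γ, Δ) []
      ⟨⟨fun ψ hψ => hr.1 ψ (Finset.mem_insert_of_mem hψ), hr.2⟩, rfl⟩
    exact ih u hu
  | tr G H Γ Δ φ _ ih =>
    intro w hC
    obtain ⟨w₀, u₀, hcto, k⟩ := counter3_zip _ [] G H w hC
    simp only [CTo] at hcto
    obtain ⟨hr, rfl⟩ := hcto
    obtain ⟨u, hu⟩ := k (Γ, Δ) []
      ⟨⟨hr.1, fun ψ hψ => hr.2 ψ (Finset.mem_insert_of_mem hψ)⟩, rfl⟩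
    exact ih u hu
  | negL G H Γ Δ φ _ ih =>
    intro w hC
    obtain ⟨w₀, u₀, hcto, k⟩ := counter3_zip _ [] G H w hC
    simp only [CTo] at hcto
    obtain ⟨hr, rfl⟩ := hcto
    have hn : Eval R v φ w₀ = some false := by
      have := hr.1 (.neg φ) (Finset.mem_insert_self _ _)
      rwa [eval_neg] at this
    obtain ⟨u, hu⟩ := k (Γ, insert φ Δ) []
      ⟨⟨fun ψ hψ => hr.1 ψ (Finset.mem_insert_of_mem hψ),
        fun ψ hψ => by
          rcases Finset.mem_insert.1 hψ with rfl | hψ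
          · exact hn
          · exact hr.2 ψ hψ⟩, rfl⟩
    exact ih u hu
  | negR G H Γ Δ φ _ ih =>
    intro w hC
    obtain ⟨w₀, u₀, hcto, k⟩ := counter3_zip _ [] G H w hC
    simp only [CTo] at hcto
    obtain ⟨hr, rfl⟩ := hcto
    have hn : Eval R v φ w₀ = some true := by
      have := hr.2 (.neg φ) (Finset.mem_insert_self _ _)
      rwa [eval_neg] at this
    obtain ⟨u, hu⟩ := k (insert φ Γ, Δ) []
      ⟨⟨fun ψ hψ => by
          rcases Finset.mem_insert.1 hψ with rfl | hψ
          · exact hn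
          · exact hr.1 ψ hψ,
        fun ψ hψ => hr.2 ψ (Finset.mem_insert_of_mem hψ)⟩, rfl⟩
    exact ih u hu
  | andL1 G H Γ Δ φ ψ' _ ih =>
    intro w hC
    obtain ⟨w₀, u₀, hcto, k⟩ := counter3_zip _ [] G H w hC
    simp only [CTo] at hcto
    obtain ⟨hr, rfl⟩ := hcto
    have ha : Eval R v (.and φ ψ') w₀ = some true := hr.1 _ (Finset.mem_insert_self _ _)
    simp only [Eval] at ha
    obtain ⟨h1, h2⟩ := (skAnd_eq_true _ _).1 ha
    obtain ⟨u, hu⟩ := k (insert φ Γ, Δ) []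
      ⟨⟨fun χ hχ => by
          rcases Finset.mem_insert.1 hχ with rfl | hχ
          · exact h1
          · exact hr.1 χ (Finset.mem_insert_of_mem hχ),
        hr.2⟩, rfl⟩
    exact ih u hu
  | andL2 G H Γ Δ φ ψ' _ ih =>
    intro w hC
    obtain ⟨w₀, u₀, hcto, k⟩ := counter3_zip _ [] G H w hC
    simp only [CTo] at hcto
    obtain ⟨hr, rfl⟩ := hcto
    have ha : Eval R v (.and φ ψ') w₀ = some true := hr.1 _ (Finset.mem_insert_self _ _)
    simp only [Eval] at ha
    obtain ⟨h1, h2⟩ := (skAnd_eq_true _ _).1 ha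
    obtain ⟨u, hu⟩ := k (insert ψ' Γ, Δ) []
      ⟨⟨fun χ hχ => by
          rcases Finset.mem_insert.1 hχ with rfl | hχ
          · exact h2
          · exact hr.1 χ (Finset.mem_insert_of_mem hχ),
        hr.2⟩, rfl⟩
    exact ih u hu
  | andR G H Γ Δ φ ψ' _ _ ih1 ih2 =>
    intro w hC
    obtain ⟨w₀, u₀, hcto, k⟩ := counter3_zip _ [] G H w hC
    simp only [CTo] at hcto
    obtain ⟨hr, rfl⟩ := hcto
    have ha : Eval R v (.and φ ψ') w₀ = some false := hr.2 _ (Finset.mem_insert_self _ _)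
    simp only [Eval] at ha
    rcases (skAnd_eq_false _ _).1 ha with h | h
    · obtain ⟨u, hu⟩ := k (Γ, insert φ Δ) []
        ⟨⟨hr.1, fun χ hχ => by
            rcases Finset.mem_insert.1 hχ with rfl | hχ
            · exact h
            · exact hr.2 χ (Finset.mem_insert_of_mem hχ)⟩, rfl⟩
      exact ih1 u hu
    · obtain ⟨u, hu⟩ := k (Γ, insert ψ' Δ) []
        ⟨⟨hr.1, fun χ hχ => by
            rcases Finset.mem_insert.1 hχ with rfl | hχ
            · exact h
            · exact hr.2 χ (Finset.mem_insert_of_mem hχ)⟩, rfl⟩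
      exact ih2 u hu
  | orL G H Γ Δ φ ψ' _ _ ih1 ih2 =>
    intro w hC
    obtain ⟨w₀, u₀, hcto, k⟩ := counter3_zip _ [] G H w hC
    simp only [CTo] at hcto
    obtain ⟨hr, rfl⟩ := hcto
    have ha : Eval R v (.or φ ψ') w₀ = some true := hr.1 _ (Finset.mem_insert_self _ _)
    simp only [Eval] at ha
    rcases (skOr_eq_true _ _).1 ha with h | h
    · obtain ⟨u, hu⟩ := k (insert φ Γ, Δ) []
        ⟨⟨fun χ hχ => by
            rcases Finset.mem_insert.1 hχ with rfl | hχ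
            · exact h
            · exact hr.1 χ (Finset.mem_insert_of_mem hχ),
          hr.2⟩, rfl⟩
      exact ih1 u hu
    · obtain ⟨u, hu⟩ := k (insert ψ' Γ, Δ) []
        ⟨⟨fun χ hχ => by
            rcases Finset.mem_insert.1 hχ with rfl | hχ
            · exact h
            · exact hr.1 χ (Finset.mem_insert_of_mem hχ),
          hr.2⟩, rfl⟩
      exact ih2 u hu
  | orR1 G H Γ Δ φ ψ' _ ih =>
    intro w hC
    obtain ⟨w₀, u₀, hcto, k⟩ := counter3_zip _ [] G H w hC
    simp only [CTo] at hcto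
    obtain ⟨hr, rfl⟩ := hcto
    have ha : Eval R v (.or φ ψ') w₀ = some false := hr.2 _ (Finset.mem_insert_self _ _)
    simp only [Eval] at ha
    obtain ⟨h1, h2⟩ := (skOr_eq_false _ _).1 ha
    obtain ⟨u, hu⟩ := k (Γ, insert φ Δ) []
      ⟨⟨hr.1, fun χ hχ => by
          rcases Finset.mem_insert.1 hχ with rfl | hχ
          · exact h1
          · exact hr.2 χ (Finset.mem_insert_of_mem hχ)⟩, rfl⟩
    exact ih u hu
  | orR2 G H Γ Δ φ ψ' _ ih =>
    intro w hC
    obtain ⟨w₀, u₀, hcto, k⟩ := counter3_zip _ [] G H w hC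
    simp only [CTo] at hcto
    obtain ⟨hr, rfl⟩ := hcto
    have ha : Eval R v (.or φ ψ') w₀ = some false := hr.2 _ (Finset.mem_insert_self _ _)
    simp only [Eval] at ha
    obtain ⟨h1, h2⟩ := (skOr_eq_false _ _).1 ha
    obtain ⟨u, hu⟩ := k (Γ, insert ψ' Δ) []
      ⟨⟨hr.1, fun χ hχ => by
          rcases Finset.mem_insert.1 hχ with rfl | hχ
          · exact h2
          · exact hr.2 χ (Finset.mem_insert_of_mem hχ)⟩, rfl⟩
    exact ih u hu
  | boxL G H Γ Δ Sg Λ φ _ ih =>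
    intro w hC
    obtain ⟨w₀, u₀, hcto, k⟩ := counter3_zip _ [(Sg, Λ)] G H w hC
    simp only [CTo] at hcto
    obtain ⟨hr1, w', hR, hr2, rfl⟩ := hcto
    have hbox : Eval R v (.box φ) w₀ = some true := hr1.1 _ (Finset.mem_insert_self _ _)
    have hφ : Eval R v φ w' = some true := (eval_box_true φ w₀).1 hbox w' hR
    obtain ⟨u, hu⟩ := k (Γ, Δ) [(insert φ Sg, Λ)]
      ⟨⟨fun χ hχ => hr1.1 χ (Finset.mem_insert_of_mem hχ), hr1.2⟩, w', hR,
        ⟨⟨fun χ hχ => by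
            rcases Finset.mem_insert.1 hχ with rfl | hχ
            · exact hφ
            · exact hr2.1 χ hχ,
          hr2.2⟩, rfl⟩⟩
    exact ih u hu
  | boxR G Γ Δ φ _ ih =>
    intro w hC
    obtain ⟨w₀, u₀, hcto, k⟩ := counter3_zip_end _ [] G w hC
    simp only [CTo] at hcto
    obtain ⟨hr, rfl⟩ := hcto
    have hbox : Eval R v (.box φ) w₀ = some false := hr.2 _ (Finset.mem_insert_self _ _)
    obtain ⟨y, hRy, hφ⟩ := (eval_box_false φ w₀).1 hbox
    obtain ⟨u, hu⟩ := k (Γ, Δ) [((∅ : Finset Fm), ({φ} : Finset Fm))] y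
      ⟨⟨hr.1, fun χ hχ => hr.2 χ (Finset.mem_insert_of_mem hχ)⟩, y, hRy,
        ⟨⟨fun χ hχ => absurd hχ (Finset.notMem_empty χ),
          fun χ hχ => by rw [Finset.mem_singleton.1 hχ]; exact hφ⟩, rfl⟩⟩
    exact ih u hu
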